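/- Let 0 < α < 1, h > 0, λ > 0 and set z₀ = i(1-α)π. Then the residue at z₀ of f₁(z) = ((1 + e^{-z/α}h^{1/α}λ)(e^{-2z} + 2e^{-z}cos(απ) + 1))^{-1} equals i e^{-iαπ} / (2 sin(απ)(1 - e^{-iπ/α}h^{1/α}λ)), provided 1 - e^{-iπ/α}h^{1/α}λ ≠ 0. -/

import Mathlib

/-!
Write `θ = απ` and `g z = e^{-2z} + 2 e^{-z} cos θ + 1 = (e^{-z} + e^{iθ})(e^{-z} + e^{-iθ})`.
Since `e^{-z₀} = -e^{iθ}`, the point `z₀` is a zero of `g` with `g'(z₀) = -2i sin θ e^{iθ} ≠ 0`,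
while the other factor `1 + e^{-z/α} h^{1/α} λ` is continuous and equals `1 - e^{-iπ/α} h^{1/α} λ ≠ 0`
at `z₀`. So the pole is simple and the residue is the reciprocal of the product of these two values.
-/

open Real Complex Filter Topology

theorem tendsto_sub_mul_inv_mul_nhdsNE {𝕜 : Type*} [NontriviallyNormedField 𝕜] {u g : 𝕜 → 𝕜}
    {z₀ g' : 𝕜} (hu : ContinuousAt u z₀) (hu₀ : u z₀ ≠ 0) (hg : HasDerivAt g g' z₀)
    (hg₀ : g z₀ = 0) (hg' : g' ≠ 0) :
    Tendsto (fun z => (z - z₀) * (u z * g z)⁻¹) (𝓝[≠] z₀) (𝓝 (u z₀ * g')⁻¹) := by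
  have hslope : Tendsto (slope g z₀) (𝓝[≠] z₀) (𝓝 g') := hasDerivAt_iff_tendsto_slope.mp hg
  have hu' : Tendsto u (𝓝[≠] z₀) (𝓝 (u z₀)) := hu.tendsto.mono_left nhdsWithin_le_nhds
  rw [mul_inv]
  refine ((hu'.inv₀ hu₀).mul (hslope.inv₀ hg')).congr fun z => ?_
  rw [slope_def_field, hg₀, sub_zero, inv_div, mul_inv]
  ring

section CexpQuadratic

variable {θ : ℝ} {z₀ : ℂ}

theorem cexp_neg_two_mul (z : ℂ) : cexp (-2 * z) = cexp (-z) ^ 2 := by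
  rw [← Complex.exp_nat_mul]
  ring_nf

theorem cexp_quadratic_eq_zero_of_cexp_neg_eq (hz₀ : cexp (-z₀) = -cexp (θ * I)) :
    cexp (-2 * z₀) + 2 * cexp (-z₀) * (Real.cos θ : ℂ) + 1 = 0 := by
  rw [cexp_neg_two_mul, hz₀, Complex.exp_mul_I, ofReal_cos]
  linear_combination Complex.sin θ ^ 2 * I_sq - Complex.cos_sq_add_sin_sq (θ : ℂ)

theorem hasDerivAt_cexp_quadratic_of_cexp_neg_eq (hz₀ : cexp (-z₀) = -cexp (θ * I)) :
    HasDerivAt (fun z => cexp (-2 * z) + 2 * cexp (-z) * (Real.cos θ : ℂ) + 1)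
      (-2 * I * Real.sin θ * cexp (θ * I)) z₀ := by
  have h2 : HasDerivAt (fun z => cexp (-2 * z)) (cexp (-2 * z₀) * (-2)) z₀ :=
    ((hasDerivAt_id z₀).const_mul (-2)).cexp.congr_deriv (by simp)
  have h1 : HasDerivAt (fun z => cexp (-z)) (cexp (-z₀) * (-1)) z₀ := (hasDerivAt_id z₀).neg.cexp
  refine ((h2.add ((h1.const_mul 2).mul_const _)).add_const 1).congr_deriv ?_
  rw [cexp_neg_two_mul, hz₀, Complex.exp_mul_I, ofReal_cos, ofReal_sin]
  ring

end CexpQuadratic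

theorem cexp_neg_one_sub_mul_pi_mul_I (α : ℝ) :
    cexp (-((((1 - α) * π : ℝ) : ℂ) * I)) = -cexp ((α * π : ℝ) * I) := by
  have : -((((1 - α) * π : ℝ) : ℂ) * I) = (α * π : ℝ) * I - π * I := by push_cast; ring
  rw [this, Complex.exp_sub, Complex.exp_pi_mul_I, div_neg, div_one]

theorem cexp_neg_one_sub_mul_pi_mul_I_div {α : ℝ} (hα : α ≠ 0) :
    cexp (-((((1 - α) * π : ℝ) : ℂ) * I) / α) = -cexp (-(π / α : ℝ) * I) := by
  have : -((((1 - α) * π : ℝ) : ℂ) * I) / α = -(π / α : ℝ) * I + π * I := by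
    have : (α : ℂ) ≠ 0 := ofReal_ne_zero.mpr hα
    push_cast
    field_simp
    ring
  rw [this, Complex.exp_add, Complex.exp_pi_mul_I, mul_neg_one]

theorem stmt_16_general (α h lam : ℝ) (hα0 : 0 < α) (hα1 : α < 1)
    (z₀ : ℂ) (hz₀ : z₀ = (((1 - α) * π : ℝ) : ℂ) * Complex.I)
    (hden : 1 - Complex.exp (-(π / α : ℝ) * Complex.I) * ((h ^ (1 / α) * lam : ℝ) : ℂ) ≠ 0) :
    Filter.Tendsto
      (fun z : ℂ => (z - z₀) *
        ((1 + Complex.exp (-z / (α : ℂ)) * ((h ^ (1 / α) * lam : ℝ) : ℂ)) *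
          (Complex.exp (-2 * z) + 2 * Complex.exp (-z) * ((Real.cos (α * π) : ℝ) : ℂ) + 1))⁻¹)
      (nhdsWithin z₀ {z₀}ᶜ)
      (nhds (Complex.I * Complex.exp (-(α * π : ℝ) * Complex.I) /
        (2 * ((Real.sin (α * π) : ℝ) : ℂ) *
          (1 - Complex.exp (-(π / α : ℝ) * Complex.I) * ((h ^ (1 / α) * lam : ℝ) : ℂ))))) := by
  set m : ℂ := ((h ^ (1 / α) * lam : ℝ) : ℂ)
  have hsin : Real.sin (α * π) ≠ 0 :=
    (Real.sin_pos_of_pos_of_lt_pi (by positivity) (by nlinarith [Real.pi_pos])).ne'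
  have hexp : cexp (-z₀) = -cexp ((α * π : ℝ) * I) := hz₀ ▸ cexp_neg_one_sub_mul_pi_mul_I α
  have hu₀ : 1 + cexp (-z₀ / α) * m = 1 - cexp (-(π / α : ℝ) * I) * m := by
    rw [hz₀, cexp_neg_one_sub_mul_pi_mul_I_div hα0.ne']
    ring
  have hderiv : -2 * I * Real.sin (α * π) * cexp ((α * π : ℝ) * I) ≠ 0 :=
    mul_ne_zero (mul_ne_zero (by simp) (ofReal_ne_zero.mpr hsin)) (Complex.exp_ne_zero _)
  have hres := tendsto_sub_mul_inv_mul_nhdsNE (z₀ := z₀)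
    (u := fun z : ℂ => 1 + cexp (-z / α) * m)
    (g := fun z => cexp (-2 * z) + 2 * cexp (-z) * (Real.cos (α * π) : ℂ) + 1)
    (by fun_prop) (by rwa [hu₀]) (hasDerivAt_cexp_quadratic_of_cexp_neg_eq hexp)
    (cexp_quadratic_eq_zero_of_cexp_neg_eq hexp) hderiv
  convert hres using 2
  rw [hu₀, neg_mul, Complex.exp_neg]
  field_simp
  rw [I_sq]
  ring

/-- Residue of `f₁` at the simple pole `z₀ = i(1-α)π`, expressed as the limit of
`(z - z₀) f₁(z)` as `z → z₀`. -/
theorem stmt_16 (α h lam : ℝ) (hα0 : 0 < α) (hα1 : α < 1) (hh : 0 < h) (hlam : 0 < lam)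
    (z₀ : ℂ) (hz₀ : z₀ = (((1 - α) * π : ℝ) : ℂ) * Complex.I)
    (hden : 1 - Complex.exp (-(π / α : ℝ) * Complex.I) * ((h ^ (1 / α) * lam : ℝ) : ℂ) ≠ 0) :
    Filter.Tendsto
      (fun z : ℂ => (z - z₀) *
        ((1 + Complex.exp (-z / (α : ℂ)) * ((h ^ (1 / α) * lam : ℝ) : ℂ)) *
          (Complex.exp (-2 * z) + 2 * Complex.exp (-z) * ((Real.cos (α * π) : ℝ) : ℂ) + 1))⁻¹)
      (nhdsWithin z₀ {z₀}ᶜ)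
      (nhds (Complex.I * Complex.exp (-(α * π : ℝ) * Complex.I) /
        (2 * ((Real.sin (α * π) : ℝ) : ℂ) *
          (1 - Complex.exp (-(π / α : ℝ) * Complex.I) * ((h ^ (1 / α) * lam : ℝ) : ℂ))))) :=
  stmt_16_general α h lam hα0 hα1 z₀ hz₀ hden
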